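/- arXiv:1010.4497 — 2 statements merged into one kernel-verified Lean document; each statement's English description precedes it below -/
import Mathlib

section
/- Let G be a symmetric V × V matrix over GF(2) with zero diagonal (a loopless graph) and v ∈ V. Then n(G) and n(G∖v) differ by exactly 1, i.e., |n(G) − n(G∖v)| = 1, where G∖v is the principal submatrix of G obtained by deleting the row and column of v. -/
open scoped symmDiff

variable {V : Type*} [DecidableEq V] [Fintype V]

/-- Distance from `X` to the set system with family `D`. -/
noncomputable def dSS (D : Set (Finset V)) (X : Finset V) : ℕ :=
  sInf ((fun Y => (X ∆ Y).card) '' D)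

/-- Pivot (twist) of a set-system family on `X`. -/
def pivotSS (D : Set (Finset V)) (X : Finset V) : Set (Finset V) :=
  (fun Y => Y ∆ X) '' D

/-- Loop complementation on `v`. -/
def lcSS (D : Set (Finset V)) (v : V) : Set (Finset V) :=
  D ∆ ((fun Z => Z ∪ {v}) '' {Z ∈ D | v ∉ Z})

/-- Dual pivot on `v`. -/
def dpSS (D : Set (Finset V)) (v : V) : Set (Finset V) :=
  D ∆ ((fun Z => Z \ {v}) '' {Z ∈ D | v ∈ Z})

/-- Delta-matroid: proper set system with the symmetric exchange axiom. -/
def DeltaMatroid (D : Set (Finset V)) : Prop :=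
  D.Nonempty ∧ ∀ X ∈ D, ∀ Y ∈ D, ∀ u ∈ X ∆ Y, ∃ v ∈ X ∆ Y, X ∆ {u, v} ∈ D

/-- Inclusion-minimal members. -/
def minFam (D : Set (Finset V)) : Set (Finset V) :=
  {X ∈ D | ∀ Y ∈ D, Y ⊆ X → Y = X}

/-- Inclusion-maximal members. -/
def maxFam (D : Set (Finset V)) : Set (Finset V) :=
  {X ∈ D | ∀ Y ∈ D, X ⊆ Y → Y = X}

/-- Members of minimum cardinality. -/
def minCardFam (D : Set (Finset V)) : Set (Finset V) :=
  {X ∈ D | ∀ Y ∈ D, X.card ≤ Y.card}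

/-- Members of maximum cardinality. -/
def maxCardFam (D : Set (Finset V)) : Set (Finset V) :=
  {X ∈ D | ∀ Y ∈ D, Y.card ≤ X.card}

/-- All members have the same cardinality. -/
def Equicardinal (F : Set (Finset V)) : Prop :=
  ∀ X ∈ F, ∀ Y ∈ F, X.card = Y.card

/-- Restriction of the family to subsets of `X`. -/
def restrictSS (D : Set (Finset V)) (X : Finset V) : Set (Finset V) :=
  {Y ∈ D | Y ⊆ X}

/-- The induced subgraph on `V ∖ {v}`: delete the row and column of `v`. -/
def deleteVertex (G : Matrix V V (ZMod 2)) (v : V) :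
    Matrix {x : V // x ≠ v} {x : V // x ≠ v} (ZMod 2) :=
  G.submatrix Subtype.val Subtype.val

/-- Nullity of a square matrix over GF(2). -/
noncomputable def nullity {n : Type*} [Fintype n] [DecidableEq n]
    (A : Matrix n n (ZMod 2)) : ℕ :=
  Fintype.card n - A.rank

/-! Over GF(2) a loopless graph is an alternating matrix `A` (`Aᵀ = -A`, zero diagonal), and the
argument works for alternating matrices over any field. Let `B = A∖v` and let `r` be the row of `v`
off the diagonal. Extension by zero identifies `ker B ∩ r⊥` with the kernel vectors of `A` vanishing
at `v`, a subspace of codimension at most one in both `ker A` and `ker B`. It has codimension one in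
`ker A` iff some kernel vector of `A` is nonzero at `v`, iff `r ∈ range B` (using `y ⬝ B y = 0`); it
has codimension one in `ker B` iff `r ∉ (ker B)⊥ = range B`, the equality holding because `B` is
skew. Exactly one of the two happens. -/

open Matrix Module LinearMap

theorem Matrix.dotProduct_mulVec_self_eq_zero {R n : Type*} [CommRing R] [Fintype n]
    {A : Matrix n n R} (hA : Aᵀ = -A) (hdiag : ∀ i, A i i = 0) (x : n → R) :
    x ⬝ᵥ A *ᵥ x = 0 := by
  have hsum : x ⬝ᵥ A *ᵥ x = ∑ p : n × n, x p.1 * A p.1 p.2 * x p.2 := by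
    simp only [dotProduct, mulVec, Finset.mul_sum, Fintype.sum_prod_type, mul_assoc]
  rw [hsum]
  refine Finset.sum_ninvolution Prod.swap (fun p => ?_) (fun p hp hswap => hp ?_)
    (fun _ => Finset.mem_univ _) Prod.swap_swap
  · have h := congr_fun₂ hA p.2 p.1
    simp only [transpose_apply, neg_apply] at h
    simp only [Prod.fst_swap, Prod.snd_swap, h]
    ring
  · rw [← congrArg Prod.fst hswap, Prod.fst_swap, hdiag, mul_zero, zero_mul]

theorem Matrix.exists_vecMul_eq_zero_and_dotProduct_ne_zero {K m n : Type*} [Field K] [Fintype m]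
    [Fintype n] (M : Matrix m n K) {b : m → K}
    (hb : b ∉ range M.mulVecLin) : ∃ z, z ᵥ* M = 0 ∧ z ⬝ᵥ b ≠ 0 := by
  classical
  obtain ⟨f, hfb, hf⟩ := Submodule.exists_le_ker_of_notMem hb
  set z := (dotProductEquiv K m).symm f
  have hz : ∀ w, z ⬝ᵥ w = f w := fun w => by
    rw [← dotProductEquiv_apply_apply, LinearEquiv.apply_symm_apply]
  refine ⟨z, funext fun j => ?_, by rwa [hz]⟩
  have hj : M *ᵥ Pi.single j 1 ∈ ker f := hf (LinearMap.mem_range_self M.mulVecLin _)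
  rw [mem_ker, ← hz, dotProduct_mulVec, dotProduct_single, mul_one] at hj
  exact hj

theorem Matrix.mem_range_mulVecLin_iff_of_transpose_eq_neg {K n : Type*} [Field K] [Fintype n]
    [DecidableEq n] {B : Matrix n n K} (hB : Bᵀ = -B) {r : n → K} :
    r ∈ range B.mulVecLin ↔ ker B.mulVecLin ≤ ker (dotProductEquiv K n r) := by
  have hvecMul : ∀ z, z ᵥ* B = -(B *ᵥ z) := fun z => by
    rw [← vecMul_transpose, hB, vecMul_neg, neg_neg]
  constructor
  · rintro ⟨y, rfl⟩ z hz
    rw [mem_ker, mulVecLin_apply] at hz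
    rw [mem_ker, dotProductEquiv_apply_apply, mulVecLin_apply, dotProduct_comm, dotProduct_mulVec,
      hvecMul, hz, neg_zero, zero_dotProduct]
  · intro hker
    by_contra hr
    obtain ⟨z, hzB, hzr⟩ := B.exists_vecMul_eq_zero_and_dotProduct_ne_zero hr
    rw [hvecMul, neg_eq_zero] at hzB
    have := hker (show z ∈ ker B.mulVecLin from hzB)
    rw [mem_ker, dotProductEquiv_apply_apply, dotProduct_comm] at this
    exact hzr this

theorem Submodule.finrank_inf_ker_add_one {K M : Type*} [Field K] [AddCommGroup M] [Module K M]
    (W : Submodule K M) [FiniteDimensional K W] {f : Dual K M} (hW : ¬W ≤ ker f) :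
    finrank K ↥(W ⊓ ker f) + 1 = finrank K W := by
  have hf : f ∘ₗ W.subtype ≠ 0 := by
    contrapose! hW
    intro x hx
    simpa using congr($hW ⟨x, hx⟩)
  rw [← Dual.finrank_ker_add_one_of_ne_zero hf, ker_comp,
    (Submodule.equivMapOfInjective _ W.injective_subtype _).finrank_eq,
    Submodule.map_comap_eq, Submodule.range_subtype]

abbrev Matrix.deleteRowCol {R n : Type*} (A : Matrix n n R) (v : n) :
    Matrix {j // j ≠ v} {j // j ≠ v} R :=
  A.submatrix Subtype.val Subtype.val

theorem Matrix.transpose_deleteRowCol_eq_neg {R n : Type*} [Neg R] {A : Matrix n n R} (v : n)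
    (hA : Aᵀ = -A) : (A.deleteRowCol v)ᵀ = -A.deleteRowCol v := by
  rw [transpose_submatrix, hA]
  rfl

section DeleteRowCol

variable {K : Type*} [Field K] (A : Matrix V V K) (v : V)

theorem Matrix.mulVec_apply_eq_add_dotProduct_ne (x : V → K) (i : V) :
    (A *ᵥ x) i = A i v * x v + (fun j : {j // j ≠ v} => A i j) ⬝ᵥ (fun j => x j) := by
  rw [mulVec, dotProduct, Fintype.sum_eq_add_sum_subtype_ne _ v]
  rfl

theorem Matrix.finrank_ker_inf_ker_proj :
    finrank K ↥(ker A.mulVecLin ⊓ ker (proj v)) =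
      finrank K ↥(ker (A.deleteRowCol v).mulVecLin ⊓
        ker (dotProductEquiv K _ fun j : {j // j ≠ v} => A v j)) := by
  set ι := Function.ExtendByZero.linearMap K (Subtype.val : {j // j ≠ v} → V)
  have hι_val : ∀ z j, ι z j.1 = z j := fun z j => Subtype.val_injective.extend_apply z 0 j
  have hι_v : ∀ z, ι z v = 0 := fun z => Function.extend_apply' _ _ _ fun ⟨j, hj⟩ => j.2 hj
  have hι : Function.Injective ι := fun z w h => funext fun j => by
    simpa only [hι_val] using congr_fun h j
  have hrange : range ι = ker (proj v) := by
    ext x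
    refine ⟨?_, fun hx => ⟨fun j => x j, funext fun i => ?_⟩⟩
    · rintro ⟨z, rfl⟩
      exact hι_v z
    · by_cases hi : i = v
      · subst hi
        rw [hι_v]
        exact hx.symm
      · exact hι_val _ ⟨i, hi⟩
  have hcomap : (ker A.mulVecLin).comap ι = ker (A.deleteRowCol v).mulVecLin ⊓
      ker (dotProductEquiv K _ fun j : {j // j ≠ v} => A v j) := by
    ext z
    have hA : ∀ i, (A *ᵥ ι z) i = (fun j : {j // j ≠ v} => A i j) ⬝ᵥ z := fun i => by
      rw [mulVec_apply_eq_add_dotProduct_ne A v, hι_v, mul_zero, zero_add]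
      simp only [hι_val]
    simp only [Submodule.mem_comap, Submodule.mem_inf, mem_ker, mulVecLin_apply,
      dotProductEquiv_apply_apply, funext_iff, Pi.zero_apply, hA]
    constructor
    · exact fun h => ⟨fun j => h j, h v⟩
    · rintro ⟨h, hv⟩ i
      by_cases hi : i = v
      · subst hi; exact hv
      · exact h ⟨i, hi⟩
  rw [← hcomap, (Submodule.equivMapOfInjective ι hι _).finrank_eq, Submodule.map_comap_eq,
    hrange, inf_comm]

theorem Matrix.exists_mulVec_eq_zero_apply_ne_zero_iff (hA : Aᵀ = -A) (hdiag : ∀ i, A i i = 0) :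
    (∃ x, A *ᵥ x = 0 ∧ x v ≠ 0) ↔
      (fun j : {j // j ≠ v} => A v j) ∈ range (A.deleteRowCol v).mulVecLin := by
  have hskew : ∀ i j, A i j = -A j i := fun i j => by
    simpa using (congr_fun₂ hA j i)
  constructor
  · rintro ⟨x, hx, hxv⟩
    refine ⟨(x v)⁻¹ • fun j : {j // j ≠ v} => x j, funext fun k => ?_⟩
    have hk := congr_fun hx k
    rw [mulVec_apply_eq_add_dotProduct_ne A v, hskew, Pi.zero_apply] at hk
    rw [mulVecLin_apply, mulVec_smul, Pi.smul_apply, smul_eq_mul]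
    change (x v)⁻¹ * ((fun j : {j // j ≠ v} => A k j) ⬝ᵥ fun j => x j) = A v k
    field_simp
    linear_combination hk
  · rintro ⟨y, hy⟩
    rw [mulVecLin_apply] at hy
    set x : V → K := fun i => if h : i = v then 1 else y ⟨i, h⟩
    have hxv : x v = 1 := dif_pos rfl
    have hxy : (fun j : {j // j ≠ v} => x j) = y := funext fun j => dif_neg j.2
    refine ⟨x, funext fun i => ?_, by rw [hxv]; exact one_ne_zero⟩
    rw [mulVec_apply_eq_add_dotProduct_ne A v, hxv, hxy, mul_one, Pi.zero_apply]
    by_cases hi : i = v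
    · subst hi
      rw [hdiag, zero_add, ← hy, dotProduct_comm]
      exact dotProduct_mulVec_self_eq_zero (transpose_deleteRowCol_eq_neg i hA)
        (fun j => hdiag j) y
    · have hk := congr_fun hy ⟨i, hi⟩
      change (fun j : {j // j ≠ v} => A i j) ⬝ᵥ y = A v i at hk
      rw [hk, hskew]
      ring

theorem Matrix.abs_finrank_ker_sub_finrank_ker_deleteRowCol (hA : Aᵀ = -A)
    (hdiag : ∀ i, A i i = 0) :
    |(finrank K (ker A.mulVecLin) : ℤ) - finrank K (ker (A.deleteRowCol v).mulVecLin)| = 1 := by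
  have hcol : ¬ker A.mulVecLin ≤ ker (proj v) ↔ ker (A.deleteRowCol v).mulVecLin ≤
      ker (dotProductEquiv K _ fun j : {j // j ≠ v} => A v j) := by
    rw [← mem_range_mulVecLin_iff_of_transpose_eq_neg (transpose_deleteRowCol_eq_neg v hA),
      ← exists_mulVec_eq_zero_apply_ne_zero_iff A v hA hdiag, SetLike.not_le_iff_exists]
    simp [mem_ker]
  rw [abs_eq zero_le_one]
  by_cases h : ker (A.deleteRowCol v).mulVecLin ≤
      ker (dotProductEquiv K _ fun j : {j // j ≠ v} => A v j)
  · rw [← Submodule.finrank_inf_ker_add_one _ (hcol.mpr h), finrank_ker_inf_ker_proj,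
      inf_eq_left.mpr h]
    simp
  · rw [← Submodule.finrank_inf_ker_add_one _ h, ← finrank_ker_inf_ker_proj,
      inf_eq_left.mpr (not_not.mp (hcol.not.mpr h))]
    simp

end DeleteRowCol

theorem nullity_eq_finrank_ker {n : Type*} [Fintype n] [DecidableEq n] (A : Matrix n n (ZMod 2)) :
    nullity A = finrank (ZMod 2) (ker A.mulVecLin) := by
  have := A.mulVecLin.finrank_range_add_finrank_ker
  rw [finrank_fintype_fun_eq_card] at this
  rw [nullity, Matrix.rank]
  omega

/-- for a loopless graph `G` (symmetric, zero diagonal) and a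
vertex `v`, the nullities of `G` and `G∖v` differ by exactly one. -/
theorem nullity_delete_loopless (G : Matrix V V (ZMod 2)) (hG : G.IsSymm)
    (hdiag : ∀ x : V, G x x = 0) (v : V) :
    |(nullity G : ℤ) - (nullity (deleteVertex G v) : ℤ)| = 1 := by
  have hskew : Gᵀ = -G := by
    ext i j
    rw [Matrix.neg_apply, ZMod.neg_eq_self_mod_two]
    exact congr_fun₂ hG i j
  rw [nullity_eq_finrank_ker, nullity_eq_finrank_ker]
  exact G.abs_finrank_ker_sub_finrank_ker_deleteRowCol v hskew hdiag
end

section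
/- Let M = (V, D) be a vertex-flip-closed delta-matroid and u ∈ V such that the deletion M∖u is proper. Then M∖u is a vertex-flip-closed delta-matroid (on ground set V ∖ {u}). -/
/-!
Neither a pivot nor a loop complementation at a vertex `v ≠ u` changes whether `u` lies in a
set, so deleting `u` commutes with every flip sequence avoiding `u`: `(M∖u)φ = (Mφ)∖u`. It then
suffices that deleting `u` from a delta-matroid leaves a delta-matroid whenever the result is
nonempty; this holds because an exchange between two sets avoiding `u` only involves elements of
their symmetric difference, which avoids `u`.
-/

open scoped symmDiff

variable {V : Type*} [DecidableEq V] [Fintype V]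

/-- A single vertex flip: `(true, u)` is the pivot `*u`, `(false, u)` is the
loop complementation `+u`. -/
def applyOp (D : Set (Finset V)) (p : Bool × V) : Set (Finset V) :=
  if p.1 then pivotSS D {p.2} else lcSS D p.2

/-- Apply a finite sequence of single-element pivots and loop complementations. -/
def applySeq (D : Set (Finset V)) (φ : List (Bool × V)) : Set (Finset V) :=
  φ.foldl applyOp D

/-- Deletion of `u`: the sets not containing `u` (ground set `V \ {u}`). -/
def delSS (D : Set (Finset V)) (u : V) : Set (Finset V) :=
  {Y ∈ D | u ∉ Y}

section

omit [Fintype V]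

omit [DecidableEq V] in
theorem delSS_symmDiff (A B : Set (Finset V)) (u : V) :
    delSS (A ∆ B) u = delSS A u ∆ delSS B u :=
  Set.inter_symmDiff_distrib_right A B _

omit [DecidableEq V] in
theorem delSS_image {f : Finset V → Finset V} {u : V} (hf : ∀ Y, u ∈ f Y ↔ u ∈ Y)
    (D : Set (Finset V)) : delSS (f '' D) u = f '' delSS D u := by
  ext Y
  constructor
  · rintro ⟨⟨Z, hZ, rfl⟩, huZ⟩
    exact ⟨Z, ⟨hZ, (hf Z).not.mp huZ⟩, rfl⟩
  · rintro ⟨Z, ⟨hZ, huZ⟩, rfl⟩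
    exact ⟨⟨Z, hZ, rfl⟩, (hf Z).not.mpr huZ⟩

theorem delSS_pivotSS_singleton (D : Set (Finset V)) {u v : V} (hvu : v ≠ u) :
    delSS (pivotSS D {v}) u = pivotSS (delSS D u) {v} :=
  delSS_image (fun Y => by simp [Finset.mem_symmDiff, hvu.symm]) D

theorem delSS_lcSS (D : Set (Finset V)) {u v : V} (hvu : v ≠ u) :
    delSS (lcSS D v) u = lcSS (delSS D u) v := by
  have hcomm : delSS {Z ∈ D | v ∉ Z} u = {Z ∈ delSS D u | v ∉ Z} := by
    ext Z
    simp only [delSS, Set.mem_ofPred_eq]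
    tauto
  rw [lcSS, delSS_symmDiff, delSS_image (fun Z => by simp [hvu.symm]), hcomm, lcSS]

theorem delSS_applyOp (D : Set (Finset V)) {u : V} {p : Bool × V} (hp : p.2 ≠ u) :
    delSS (applyOp D p) u = applyOp (delSS D u) p := by
  obtain ⟨_ | _, v⟩ := p
  · exact delSS_lcSS D hp
  · exact delSS_pivotSS_singleton D hp

theorem delSS_applySeq (D : Set (Finset V)) {u : V} {φ : List (Bool × V)}
    (hφ : ∀ p ∈ φ, p.2 ≠ u) : delSS (applySeq D φ) u = applySeq (delSS D u) φ := by
  induction φ generalizing D with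
  | nil => rfl
  | cons p φ ih =>
    rw [List.forall_mem_cons] at hφ
    rw [applySeq, List.foldl_cons, ← applySeq, ih _ hφ.2, delSS_applyOp D hφ.1]
    rfl

theorem Set.Nonempty.applyOp {D : Set (Finset V)} (hD : D.Nonempty) (p : Bool × V) :
    (applyOp D p).Nonempty := by
  obtain ⟨_ | _, v⟩ := p
  · -- a member avoiding `v` survives `+v`; if there is none, nothing is added
    by_cases hv : ∃ Z ∈ D, v ∉ Z
    · obtain ⟨Z, hZ, hvZ⟩ := hv
      refine ⟨Z, Or.inl ⟨hZ, ?_⟩⟩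
      rintro ⟨W, -, rfl⟩
      simp at hvZ
    · obtain ⟨Y, hY⟩ := hD
      refine ⟨Y, Or.inl ⟨hY, ?_⟩⟩
      rintro ⟨W, hW, rfl⟩
      exact hv ⟨W, hW⟩
  · obtain ⟨Y, hY⟩ := hD
    exact ⟨Y ∆ {v}, Y, hY, rfl⟩

theorem Set.Nonempty.applySeq {D : Set (Finset V)} (hD : D.Nonempty) (φ : List (Bool × V)) :
    (applySeq D φ).Nonempty := by
  induction φ generalizing D with
  | nil => exact hD
  | cons p φ ih => exact ih (hD.applyOp p)

theorem DeltaMatroid.delSS {D : Set (Finset V)} (hD : DeltaMatroid D) {u : V}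
    (hne : (delSS D u).Nonempty) : DeltaMatroid (delSS D u) := by
  refine ⟨hne, ?_⟩
  rintro X ⟨hX, huX⟩ Y ⟨hY, huY⟩ w hw
  obtain ⟨v, hv, hXwv⟩ := hD.2 X hX Y hY w hw
  have hwu : w ≠ u := by
    rintro rfl
    simp [Finset.mem_symmDiff, huX, huY] at hw
  have hvu : v ≠ u := by
    rintro rfl
    simp [Finset.mem_symmDiff, huX, huY] at hv
  exact ⟨v, hv, hXwv, by simp [Finset.mem_symmDiff, huX, hwu.symm, hvu.symm]⟩

end

theorem vfClosed_delete_general (D : Set (Finset V)) (u : V)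
    (hVF : ∀ φ : List (Bool × V), DeltaMatroid (applySeq D φ))
    (hprop : (delSS D u).Nonempty) :
    ∀ φ : List (Bool × V), (∀ p ∈ φ, p.2 ≠ u) →
      DeltaMatroid (applySeq (delSS D u) φ) := by
  intro φ hφ
  rw [← delSS_applySeq D hφ]
  exact (hVF φ).delSS (delSS_applySeq D hφ ▸ hprop.applySeq φ)

/-- if `M` is a vertex-flip-closed delta-matroid and `M∖u` is
proper, then `M∖u` is a vertex-flip-closed delta-matroid on ground set `V∖{u}`. -/
theorem vfClosed_delete (D : Set (Finset V)) (u : V)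
    (hDM : DeltaMatroid D)
    (hVF : ∀ φ : List (Bool × V), DeltaMatroid (applySeq D φ))
    (hprop : (delSS D u).Nonempty) :
    ∀ φ : List (Bool × V), (∀ p ∈ φ, p.2 ≠ u) →
      DeltaMatroid (applySeq (delSS D u) φ) :=
  vfClosed_delete_general D u hVF hprop
end
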